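/- arXiv:2308.13689 — 3 statements merged into one kernel-verified Lean document; each statement's English description precedes it below -/
import Mathlib

section
/- Combinatorial geodesics project to geodesics (Lemma 'NR hp in Q'): Let a hierarchical family of trees be given, with 0-consistent set Q. Let x̂, ŷ ∈ Q, set n = d_Q(x̂, ŷ), and let x̂ = ẑ₀, ẑ₁, …, ẑ_n = ŷ be a combinatorial geodesic in Q, i.e. d_Q(ẑ_{i−1}, ẑ_i) = 1 for each 1 ≤ i ≤ n. Then for every U ∈ 𝒰, the sequence of vertices (ẑ₀)_U, (ẑ₁)_U, …, (ẑ_n)_U of T_U, after deleting consecutive repetitions, is exactly the vertex sequence of the geodesic in T_U from x̂_U to ŷ_U; in particular, the projection of the combinatorial geodesic to each T_U is an unparameterized geodesic. -/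
/-- `a` and `b` lie in the same connected component of the tree `G` with the vertex `w`
deleted (equivalently: `a, b ≠ w` and `w` does not lie on the geodesic from `a` to `b`). -/
def treeSameComp {α : Type*} (G : SimpleGraph α) (w a b : α) : Prop :=
  a ≠ w ∧ b ≠ w ∧ G.dist a w + G.dist w b ≠ G.dist a b

/-- `m` is the median of `a`, `b`, `c` in the tree `G`: it lies on all three
pairwise geodesics. -/
def IsTreeMedian {α : Type*} (G : SimpleGraph α) (a b c m : α) : Prop :=
  G.dist a m + G.dist m b = G.dist a b ∧
  G.dist a m + G.dist m c = G.dist a c ∧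
  G.dist b m + G.dist m c = G.dist b c

/-- A hierarchical family of trees: a finite index set `Idx` of domains with relations
`⊏` (proper nesting) and `⊥` (orthogonality), a finite simplicial tree `G U` on the
finite vertex set `Vtx U` for each domain `U`, marked vertices labeled by the finite set
`F`, and relative projection data `δup`/`δdown` satisfying coherence, bounded geodesic
image, and consistency of the marked tuples. -/
structure HFT (Idx : Type*) [Fintype Idx] (Vtx : Idx → Type*) [∀ U, Fintype (Vtx U)]
    (F : Type*) [Fintype F] where
  /-- proper nesting `⊏` -/
  pnest : Idx → Idx → Prop
  /-- orthogonality `⊥` -/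
  orth : Idx → Idx → Prop
  pnest_irrefl : ∀ U, ¬ pnest U U
  pnest_trans : ∀ U V W, pnest U V → pnest V W → pnest U W
  /-- `⊏` has a unique maximal element -/
  max_unique : ∃! m : Idx, ∀ W, ¬ pnest m W
  orth_symm : ∀ U V, orth U V → orth V U
  orth_irrefl : ∀ U, ¬ orth U U
  orth_not_pnest : ∀ U V, orth U V → ¬ pnest U V
  /-- the tree associated to each domain -/
  G : (U : Idx) → SimpleGraph (Vtx U)
  tree : ∀ U, (G U).IsTree
  /-- the marked vertex of `T_U` labeled by `f : F` -/
  mark : (U : Idx) → F → Vtx U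
  /-- every leaf is marked -/
  leaf_marked : ∀ (U : Idx) (v : Vtx U),
    Set.Subsingleton {w : Vtx U | (G U).Adj v w} → ∃ f : F, mark U f = v
  /-- the relative projection vertex `δup V U = δ^V_U ∈ T_U`
  (relevant when `V ⊏ U` or `V ⋔ U`) -/
  δup : (V U : Idx) → Vtx U
  /-- the relative projection map `δdown U V = δ^U_V : T_U → T_V` (for `V ⊏ U`) -/
  δdown : (U V : Idx) → Vtx U → Vtx V
  /-- every component of `T_U − δ^V_U` contains a marked vertex -/
  comp_marked : ∀ V U : Idx,
    (pnest V U ∨ (V ≠ U ∧ ¬ pnest V U ∧ ¬ pnest U V ∧ ¬ orth V U)) →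
    ∀ a : Vtx U, a ≠ δup V U → ∃ f : F, treeSameComp (G U) (δup V U) a (mark U f)
  /-- `δ^U_W = δ^V_W` whenever `U ⊥ V`, `V ⊏ W`, and `U ⊏ W` or `U ⋔ W` -/
  δ_coherent : ∀ U V W : Idx, orth U V → pnest V W →
    (pnest U W ∨ (U ≠ W ∧ ¬ pnest U W ∧ ¬ pnest W U ∧ ¬ orth U W)) →
    δup U W = δup V W
  /-- bounded geodesic image: `δ^U_V` is constant on each component of `T_U − δ^V_U` … -/
  bgi_const : ∀ U V : Idx, pnest V U → ∀ a b : Vtx U,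
    treeSameComp (G U) (δup V U) a b → δdown U V a = δdown U V b
  /-- … with value `f̂_V` on the component containing `f̂_U` -/
  bgi_mark : ∀ U V : Idx, pnest V U → ∀ f : F,
    mark U f ≠ δup V U → δdown U V (mark U f) = mark V f
  /-- the marked tuples are 0-consistent (transverse case) -/
  mark_consistent_t : ∀ (f : F) (U V : Idx),
    (U ≠ V ∧ ¬ pnest U V ∧ ¬ pnest V U ∧ ¬ orth U V) →
    mark U f = δup V U ∨ mark V f = δup U V
  /-- the marked tuples are 0-consistent (nested case) -/
  mark_consistent_n : ∀ (f : F) (U V : Idx), pnest V U →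
    mark U f = δup V U ∨ mark V f = δdown U V (mark U f)

namespace HFT

variable {Idx : Type*} [Fintype Idx] {Vtx : Idx → Type*} [∀ U, Fintype (Vtx U)]
  {F : Type*} [Fintype F]

/-- Transversality `U ⋔ V`: distinct, not nested either way, not orthogonal. -/
def transv (H : HFT Idx Vtx F) (U V : Idx) : Prop :=
  U ≠ V ∧ ¬ H.pnest U V ∧ ¬ H.pnest V U ∧ ¬ H.orth U V

/-- A tuple of vertices is 0-consistent. -/
def ZeroConsistent (H : HFT Idx Vtx F) (x : ∀ U, Vtx U) : Prop :=
  (∀ U V, H.transv U V → x U = H.δup V U ∨ x V = H.δup U V) ∧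
  (∀ U V, H.pnest V U → x U = H.δup V U ∨ x V = H.δdown U V (x U))

/-- The set `Q` of all 0-consistent tuples. -/
def Q (H : HFT Idx Vtx F) : Set (∀ U, Vtx U) := {x | H.ZeroConsistent x}

/-- The ℓ¹ metric on tuples: `d_Q(x, y) = Σ_U d_{T_U}(x_U, y_U)`. -/
noncomputable def dQ (H : HFT Idx Vtx F) (x y : ∀ U, Vtx U) : ℕ :=
  ∑ U : Idx, (H.G U).dist (x U) (y U)

/-- The half-tree of the edge `{u, v}` of `T_U` on the `u`-side: the vertices strictly
closer to `u` than to `v`. -/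
def halfTree (H : HFT Idx Vtx F) (U : Idx) (u v : Vtx U) : Set (Vtx U) :=
  {w | (H.G U).dist w u < (H.G U).dist w v}

/-- The half-space of `Q` determined by the half-tree of `{u, v} ⊆ T_U` on the
`u`-side. -/
def halfSpace (H : HFT Idx Vtx F) (U : Idx) (u v : Vtx U) : Set (∀ W, Vtx W) :=
  {x | x ∈ H.Q ∧ x U ∈ H.halfTree U u v}

/-- Two walls (dual to the edge `{u, v}` of `T_U` and the edge `{u', v'}` of `T_V`)
cross: all four intersections of half-spaces are nonempty. -/
def Crosses (H : HFT Idx Vtx F) (U : Idx) (u v : Vtx U) (V : Idx) (u' v' : Vtx V) :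
    Prop :=
  (H.halfSpace U u v ∩ H.halfSpace V u' v').Nonempty ∧
  (H.halfSpace U u v ∩ H.halfSpace V v' u').Nonempty ∧
  (H.halfSpace U v u ∩ H.halfSpace V u' v').Nonempty ∧
  (H.halfSpace U v u ∩ H.halfSpace V v' u').Nonempty

/-- Two walls are transverse: none of the four inclusions among their half-spaces and
complements holds. -/
def WallTransverse (H : HFT Idx Vtx F) (U : Idx) (u v : Vtx U) (V : Idx)
    (u' v' : Vtx V) : Prop :=
  ¬ (H.halfSpace U u v ⊆ H.halfSpace V u' v') ∧
  ¬ (H.halfSpace U u v ⊆ H.halfSpace V v' u') ∧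
  ¬ (H.halfSpace U v u ⊆ H.halfSpace V u' v') ∧
  ¬ (H.halfSpace U v u ⊆ H.halfSpace V v' u')

end HFT

variable {Idx : Type*} [Fintype Idx] {Vtx : Idx → Type*} [∀ U, Fintype (Vtx U)]
  {F : Type*} [Fintype F]

/- A combinatorial geodesic has length `d_Q(x̂, ŷ) = Σ_U d_U(x̂_U, ŷ_U)`, while in each tree
the projected path has length at least `d_U(x̂_U, ŷ_U)`; so every projected path is tight:
its length equals the distance between its endpoints. A tight path stays on the geodesic and
moves away from its start monotonically, and since it moves by at most one edge at a time,
it passes through every vertex of the geodesic, which in a tree is determined by its distance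
from the start. -/

open SimpleGraph Finset

theorem Nat.exists_le_eq_of_le_add_one {f : ℕ → ℕ} {n k : ℕ}
    (hf : ∀ i < n, f (i + 1) ≤ f i + 1) (h0 : f 0 ≤ k) (hn : k ≤ f n) :
    ∃ i ≤ n, f i = k := by
  induction n with
  | zero => exact ⟨0, le_rfl, le_antisymm h0 hn⟩
  | succ n ih =>
    by_cases hk : k ≤ f n
    · obtain ⟨i, hi, hfi⟩ := ih (fun i hi => hf i (by omega)) hk
      exact ⟨i, by omega, hfi⟩
    · exact ⟨n + 1, le_rfl, by have := hf n (by omega); omega⟩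

namespace SimpleGraph

variable {α : Type*} {G : SimpleGraph α}

theorem Connected.eq_or_adj_of_dist_le_one (hG : G.Connected) {u v : α}
    (h : G.dist u v ≤ 1) : u = v ∨ G.Adj u v := by
  rcases Nat.le_one_iff_eq_zero_or_eq_one.mp h with h | h
  · exact .inl (hG.dist_eq_zero_iff.mp h)
  · exact .inr (dist_eq_one_iff_adj.mp h)

theorem IsTree.eq_of_dist_eq_of_dist_add_dist_eq (hT : G.IsTree) {x y a b : α}
    (ha : G.dist x a + G.dist a y = G.dist x y) (hb : G.dist x b + G.dist b y = G.dist x y)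
    (hab : G.dist x a = G.dist x b) : a = b := by
  obtain ⟨p, hp⟩ := hT.connected.exists_walk_length_eq_dist x a
  obtain ⟨q, hq⟩ := hT.connected.exists_walk_length_eq_dist a y
  obtain ⟨p', hp'⟩ := hT.connected.exists_walk_length_eq_dist x b
  obtain ⟨q', hq'⟩ := hT.connected.exists_walk_length_eq_dist b y
  have hpq : (p.append q).IsPath :=
    (p.append q).isPath_of_length_eq_dist (by rw [Walk.length_append, hp, hq, ha])
  have hpq' : (p'.append q').IsPath :=
    (p'.append q').isPath_of_length_eq_dist (by rw [Walk.length_append, hp', hq', hb])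
  -- both vertices sit at position `d(x, a)` on the unique path from `x` to `y`
  have hpath : p.append q = p'.append q' :=
    congrArg Subtype.val ((hT.isAcyclic.subsingleton_path x y).elim ⟨_, hpq⟩ ⟨_, hpq'⟩)
  have hget : (p.append q).getVert (G.dist x a) = a := by
    rw [← hp, Walk.getVert_append]; simp
  have hget' : (p'.append q').getVert (G.dist x b) = b := by
    rw [← hp', Walk.getVert_append]; simp
  rw [← hget, ← hget', hpath, hab]

section Chain

variable (hG : G.Connected)
include hG

theorem Connected.dist_le_sum_Ico (p : ℕ → α) {a b : ℕ} (hab : a ≤ b) :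
    G.dist (p a) (p b) ≤ ∑ i ∈ Ico a b, G.dist (p i) (p (i + 1)) := by
  induction b, hab using Nat.le_induction with
  | base => simp
  | succ b hab ih =>
    rw [sum_Ico_succ_top hab]
    exact (hG.dist_triangle (v := p b)).trans (by omega)

theorem Connected.dist_le_sum_range (p : ℕ → α) (n : ℕ) :
    G.dist (p 0) (p n) ≤ ∑ i ∈ range n, G.dist (p i) (p (i + 1)) := by
  rw [range_eq_Ico]
  exact hG.dist_le_sum_Ico p n.zero_le

variable {p : ℕ → α} {n : ℕ}
  (htight : ∑ i ∈ range n, G.dist (p i) (p (i + 1)) = G.dist (p 0) (p n))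
include htight

theorem Connected.dist_eq_sum_range_and_dist_add_dist_eq {i : ℕ} (hi : i ≤ n) :
    G.dist (p 0) (p i) = ∑ j ∈ range i, G.dist (p j) (p (j + 1)) ∧
      G.dist (p 0) (p i) + G.dist (p i) (p n) = G.dist (p 0) (p n) := by
  have hhead := hG.dist_le_sum_range p i
  have htail := hG.dist_le_sum_Ico p hi
  have hsplit := sum_range_add_sum_Ico (fun j => G.dist (p j) (p (j + 1))) hi
  have htri : G.dist (p 0) (p n) ≤ G.dist (p 0) (p i) + G.dist (p i) (p n) :=
    hG.dist_triangle
  constructor <;> omega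

theorem Connected.dist_le_dist_succ_of_tight {i : ℕ} (hi : i < n) :
    G.dist (p 0) (p i) ≤ G.dist (p 0) (p (i + 1)) := by
  rw [(hG.dist_eq_sum_range_and_dist_add_dist_eq htight hi.le).1,
    (hG.dist_eq_sum_range_and_dist_add_dist_eq htight hi).1, sum_range_succ]
  exact Nat.le_add_right _ _

end Chain

theorem IsTree.exists_eq_of_tight (hT : G.IsTree) {p : ℕ → α} {n : ℕ}
    (htight : ∑ i ∈ range n, G.dist (p i) (p (i + 1)) = G.dist (p 0) (p n))
    (hstep : ∀ i < n, G.dist (p i) (p (i + 1)) ≤ 1) {w : α}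
    (hw : G.dist (p 0) w + G.dist w (p n) = G.dist (p 0) (p n)) :
    ∃ i ≤ n, p i = w := by
  have hG := hT.connected
  have hprefix {i} (hi : i ≤ n) := hG.dist_eq_sum_range_and_dist_add_dist_eq htight hi
  obtain ⟨i, hi, hdist⟩ := Nat.exists_le_eq_of_le_add_one (f := fun i => G.dist (p 0) (p i))
    (k := G.dist (p 0) w)
    (fun i hi => by
      rw [(hprefix hi.le).1, (hprefix hi).1, sum_range_succ]
      exact Nat.add_le_add_left (hstep i hi) _)
    (by simp) (by omega)
  exact ⟨i, hi, hT.eq_of_dist_eq_of_dist_add_dist_eq (hprefix hi).2 hw hdist⟩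

end SimpleGraph

theorem SimpleGraph.sum_range_dist_eq_dist_of_sum_le {ι : Type*} [Fintype ι]
    {β : ι → Type*} {G : ∀ U, SimpleGraph (β U)} (hG : ∀ U, (G U).Connected)
    {p : ℕ → ∀ U, β U} {n : ℕ}
    (h : ∑ i ∈ range n, ∑ U, (G U).dist (p i U) (p (i + 1) U) ≤
      ∑ U, (G U).dist (p 0 U) (p n U))
    (U : ι) :
    ∑ i ∈ range n, (G U).dist (p i U) (p (i + 1) U) = (G U).dist (p 0 U) (p n U) := by
  have hle : ∀ U ∈ univ, (G U).dist (p 0 U) (p n U) ≤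
      ∑ i ∈ range n, (G U).dist (p i U) (p (i + 1) U) :=
    fun U _ => (hG U).dist_le_sum_range (fun i => p i U) n
  rw [sum_comm] at h
  exact ((sum_eq_sum_iff_of_le hle).mp (h.antisymm' (sum_le_sum hle)) U (mem_univ U)).symm

theorem combinatorial_geodesics_project_general (H : HFT Idx Vtx F)
    (x y : ∀ U, Vtx U)
    (n : ℕ) (hn : n = H.dQ x y)
    (z : Fin (n + 1) → ∀ U, Vtx U)
    (hz0 : z 0 = x) (hzl : z (Fin.last n) = y)
    (hstep : ∀ i : Fin n, H.dQ (z i.castSucc) (z i.succ) = 1) :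
    ∀ U : Idx,
      -- every term lies on the geodesic from `x U` to `y U`
      (∀ i, (H.G U).dist (x U) (z i U) + (H.G U).dist (z i U) (y U) =
        (H.G U).dist (x U) (y U)) ∧
      -- the projected sequence moves monotonically away from `x U`
      (∀ i : Fin n,
        (H.G U).dist (x U) (z i.castSucc U) ≤ (H.G U).dist (x U) (z i.succ U)) ∧
      -- consecutive terms are equal or adjacent
      (∀ i : Fin n, z i.castSucc U = z i.succ U ∨
        (H.G U).Adj (z i.castSucc U) (z i.succ U)) ∧
      -- every vertex of the geodesic from `x U` to `y U` occurs
      (∀ w : Vtx U,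
        (H.G U).dist (x U) w + (H.G U).dist w (y U) = (H.G U).dist (x U) (y U) →
        ∃ i, z i U = w) := by
  set p : ℕ → ∀ U, Vtx U := fun k => z (Fin.ofNat (n + 1) k)
  have hzp (i : Fin (n + 1)) : z i = p i := by simp [p]
  have hcast (i : Fin n) : z i.castSucc = p i := by simp [hzp]
  have hsucc (i : Fin n) : z i.succ = p (i + 1) := by simp [hzp]
  have hx : x = p 0 := by simp [← hz0, hzp]
  have hy : y = p n := by simp [← hzl, hzp]
  subst hx hy
  have hunit (i) (hi : i < n) : ∑ U, (H.G U).dist (p i U) (p (i + 1) U) = 1 := by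
    have := hstep ⟨i, hi⟩
    rwa [HFT.dQ, hcast, hsucc] at this
  have htight := sum_range_dist_eq_dist_of_sum_le (fun U => (H.tree U).connected) (p := p)
    (n := n) (by rw [sum_congr rfl fun i hi => hunit i (mem_range.mp hi), ← HFT.dQ]; simp [← hn])
  intro U
  have hG := (H.tree U).connected
  have hstepU (i) (hi : i < n) : (H.G U).dist (p i U) (p (i + 1) U) ≤ 1 :=
    hunit i hi ▸ single_le_sum (f := fun U => (H.G U).dist (p i U) (p (i + 1) U))
      (fun _ _ => Nat.zero_le _) (mem_univ U)
  refine ⟨fun i => ?_, fun i => ?_, fun i => ?_, fun w hw => ?_⟩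
  · rw [hzp]; exact (hG.dist_eq_sum_range_and_dist_add_dist_eq (htight U) i.is_le).2
  · rw [hcast, hsucc]; exact hG.dist_le_dist_succ_of_tight (htight U) i.isLt
  · rw [hcast, hsucc]; exact hG.eq_or_adj_of_dist_le_one (hstepU i i.isLt)
  · obtain ⟨i, hi, rfl⟩ := (H.tree U).exists_eq_of_tight (htight U) hstepU hw
    exact ⟨⟨i, by omega⟩, by rw [hzp]⟩

/-- **Combinatorial geodesics project to geodesics** (Lemma `NR hp in Q`): along a
combinatorial geodesic in `Q` from `x̂` to `ŷ`, in each tree `T_U` the coordinates stay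
on the geodesic from `x̂_U` to `ŷ_U`, move monotonically along it by steps which are
trivial or along an edge, and visit every vertex of it; i.e. after deleting consecutive
repetitions the projected sequence is exactly the vertex sequence of that geodesic. -/
theorem combinatorial_geodesics_project (H : HFT Idx Vtx F)
    (x y : ∀ U, Vtx U) (hx : x ∈ H.Q) (hy : y ∈ H.Q)
    (n : ℕ) (hn : n = H.dQ x y)
    (z : Fin (n + 1) → ∀ U, Vtx U)
    (hzQ : ∀ i, z i ∈ H.Q) (hz0 : z 0 = x) (hzl : z (Fin.last n) = y)
    (hstep : ∀ i : Fin n, H.dQ (z i.castSucc) (z i.succ) = 1) :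
    ∀ U : Idx,
      -- every term lies on the geodesic from `x U` to `y U`
      (∀ i, (H.G U).dist (x U) (z i U) + (H.G U).dist (z i U) (y U) =
        (H.G U).dist (x U) (y U)) ∧
      -- the projected sequence moves monotonically away from `x U`
      (∀ i : Fin n,
        (H.G U).dist (x U) (z i.castSucc U) ≤ (H.G U).dist (x U) (z i.succ U)) ∧
      -- consecutive terms are equal or adjacent
      (∀ i : Fin n, z i.castSucc U = z i.succ U ∨
        (H.G U).Adj (z i.castSucc U) (z i.succ U)) ∧
      -- every vertex of the geodesic from `x U` to `y U` occurs
      (∀ w : Vtx U,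
        (H.G U).dist (x U) w + (H.G U).dist w (y U) = (H.G U).dist (x U) (y U) →
        ∃ i, z i U = w) :=
  combinatorial_geodesics_project_general H x y n hn z hz0 hzl hstep
end

section
/- Ultrafilters select a unique vertex in each tree (Lemma 'dual well-defined', finite case): Let a hierarchical family of trees be given, with 0-consistent set Q, and let σ be an ultrafilter on the half-spaces of Q. Then for each U ∈ 𝒰, the set of vertices of T_U lying in σ(e) for every edge e of T_U is a singleton. -/
/-!
An inclusion of half-trees of `T_U` gives the same inclusion of half-spaces of `Q`, so `σ`
restricts to a consistent choice of half-trees of the single tree `T_U`. The vertex of `T_U`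
lying in the largest number of chosen half-trees lies in all of them: otherwise its neighbour
towards a missed half-tree would lie in strictly more. Two distinct such vertices are impossible,
since the edge at one of them towards the other has a chosen half-tree missing one of the two.
-/

namespace SimpleGraph

variable {V : Type*} {T : SimpleGraph V} {a u v w x y z : V}

def halfTree (T : SimpleGraph V) (u v : V) : Set V :=
  {z | T.dist z u < T.dist z v}

lemma mem_halfTree_self (huv : T.Adj u v) : u ∈ T.halfTree u v := by
  simp [halfTree, dist_eq_one_iff_adj.mpr huv]

lemma Walk.dist_add_dist_le_length (p : T.Walk z w) (hx : x ∈ p.support) :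
    T.dist z x + T.dist x w ≤ p.length := by
  classical
  calc T.dist z x + T.dist x w
      ≤ (p.takeUntil x hx).length + (p.dropUntil x hx).length :=
        add_le_add (dist_le _) (dist_le _)
    _ = p.length := by rw [← Walk.length_append, p.take_spec hx]

lemma Connected.exists_adj_dist_add_one_eq (hT : T.Connected) (h : z ≠ u) :
    ∃ a, T.Adj z a ∧ T.dist a u + 1 = T.dist z u := by
  obtain ⟨p, hp⟩ := hT.exists_walk_length_eq_dist z u
  cases p with
  | nil => exact absurd rfl h
  | cons hza q =>
    refine ⟨_, hza, le_antisymm ?_ ?_⟩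
    · rw [← hp, Walk.length_cons]
      exact Nat.add_le_add_right (dist_le q) 1
    · calc T.dist z u ≤ T.dist z _ + T.dist _ u := hT.dist_triangle
        _ = T.dist _ u + 1 := by rw [dist_eq_one_iff_adj.mpr hza, add_comm]

namespace IsTree

lemma length_eq_dist_of_isPath (hT : T.IsTree) {p : T.Walk z w} (hp : p.IsPath) :
    p.length = T.dist z w := by
  obtain ⟨q, hq, hlen⟩ := hT.connected.exists_path_of_dist z w
  have : (⟨p, hp⟩ : T.Path z w) = ⟨q, hq⟩ := (hT.isAcyclic.subsingleton_path z w).elim _ _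
  rw [← hlen, Subtype.mk.inj this]

lemma mem_halfTree_swap_of_notMem (hT : T.IsTree) (huv : T.Adj u v) (hz : z ∉ T.halfTree u v) :
    z ∈ T.halfTree v u :=
  lt_of_le_of_ne (not_lt.mp hz) (hT.dist_ne_of_adj z huv).symm

/-- Geodesics to `u` and from `v` have disjoint supports, so joining them across the edge gives
a path, which in a tree is a geodesic. -/
lemma dist_eq_of_mem_halfTree (hT : T.IsTree) (huv : T.Adj u v) (hz : z ∈ T.halfTree u v)
    (hw : w ∈ T.halfTree v u) : T.dist z w = T.dist z u + 1 + T.dist v w := by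
  obtain ⟨p, hp, hplen⟩ := hT.connected.exists_path_of_dist z u
  obtain ⟨q, hq, hqlen⟩ := hT.connected.exists_path_of_dist v w
  have hdisj : ∀ x ∈ p.support, ∀ y ∈ q.support, x ≠ y := by
    rintro x hxp _ hxq rfl
    have hxp := p.dist_add_dist_le_length hxp
    have hxq := q.dist_add_dist_le_length hxq
    have hzv : T.dist z v ≤ T.dist z x + T.dist x v := hT.connected.dist_triangle
    have hwu : T.dist w u ≤ T.dist w x + T.dist x u := hT.connected.dist_triangle
    rw [halfTree, Set.mem_ofPred_eq] at hz hw
    rw [dist_comm (u := w) (v := v)] at hw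
    rw [dist_comm (u := x) (v := v)] at hzv
    rw [dist_comm (u := w) (v := x)] at hwu
    omega
  have hr : (p.append (q.cons huv)).IsPath := by
    rw [Walk.isPath_def, Walk.support_append, Walk.support_cons, List.tail_cons,
      List.nodup_append]
    exact ⟨hp.support_nodup, hq.support_nodup, hdisj⟩
  rw [← hT.length_eq_dist_of_isPath hr, Walk.length_append, Walk.length_cons, hplen, hqlen]
  ring

lemma eq_and_eq_of_adj_of_mem_halfTree (hT : T.IsTree) (huv : T.Adj u v) (hxy : T.Adj x y)
    (hx : x ∈ T.halfTree u v) (hy : y ∈ T.halfTree v u) : x = u ∧ y = v := by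
  have h := hT.dist_eq_of_mem_halfTree huv hx hy
  rw [dist_eq_one_iff_adj.mpr hxy] at h
  exact ⟨hT.connected.dist_eq_zero_iff.mp (by omega),
    (hT.connected.dist_eq_zero_iff.mp (by omega)).symm⟩

lemma halfTree_subset_halfTree (hT : T.IsTree) (huv : T.Adj u v) (hw : w ∈ T.halfTree v u)
    (ha : T.dist a u + 1 = T.dist w u) :
    T.halfTree u v ⊆ T.halfTree a w := by
  intro z hz
  have hzw := hT.dist_eq_of_mem_halfTree huv hz hw
  have huw := hT.dist_eq_of_mem_halfTree huv (mem_halfTree_self huv) hw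
  have hza : T.dist z a ≤ T.dist z u + T.dist u a := hT.connected.dist_triangle
  rw [dist_self, dist_comm (u := u) (v := w)] at huw
  rw [dist_comm (u := u) (v := a)] at hza
  show T.dist z a < T.dist z w
  omega

end IsTree

/-- `σ u v` selects the `u`-side of the edge `{u, v}`. -/
structure IsConsistentOrientation (T : SimpleGraph V) (σ : V → V → Prop) : Prop where
  choice : ∀ ⦃u v⦄, T.Adj u v → (σ u v ↔ ¬ σ v u)
  upward : ∀ ⦃u v a b⦄, T.Adj u v → T.Adj a b → σ u v →
    T.halfTree u v ⊆ T.halfTree a b → σ a b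

def chosenHalfTreesContaining (T : SimpleGraph V) (σ : V → V → Prop) (x : V) : Set (V × V) :=
  {e | T.Adj e.1 e.2 ∧ σ e.1 e.2 ∧ x ∈ T.halfTree e.1 e.2}

namespace IsConsistentOrientation

variable {σ : V → V → Prop}

lemma exists_adj_of_notMem_halfTree (hT : T.IsTree) (hσ : T.IsConsistentOrientation σ)
    (huv : T.Adj u v) (hσuv : σ u v) (hw : w ∉ T.halfTree u v) :
    ∃ a, T.Adj w a ∧ σ a w := by
  have hwu : w ≠ u := by
    rintro rfl
    exact hw (mem_halfTree_self huv)
  obtain ⟨a, hwa, ha⟩ := hT.connected.exists_adj_dist_add_one_eq hwu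
  exact ⟨a, hwa, hσ.upward huv hwa.symm hσuv
    (hT.halfTree_subset_halfTree huv (hT.mem_halfTree_swap_of_notMem huv hw) ha)⟩

lemma chosenHalfTreesContaining_ssubset (hT : T.IsTree) (hσ : T.IsConsistentOrientation σ)
    (hwa : T.Adj w a) (hσaw : σ a w) :
    T.chosenHalfTreesContaining σ w ⊂ T.chosenHalfTreesContaining σ a := by
  have hsub : T.chosenHalfTreesContaining σ w ⊆ T.chosenHalfTreesContaining σ a := by
    rintro ⟨u, v⟩ ⟨huv, hσuv, hw⟩
    refine ⟨huv, hσuv, by_contra fun ha => ?_⟩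
    obtain ⟨rfl, rfl⟩ :=
      hT.eq_and_eq_of_adj_of_mem_halfTree huv hwa hw (hT.mem_halfTree_swap_of_notMem huv ha)
    exact (hσ.choice hwa).mp hσuv hσaw
  refine (Set.ssubset_iff_of_subset hsub).mpr
    ⟨(a, w), ⟨hwa.symm, hσaw, mem_halfTree_self hwa.symm⟩, ?_⟩
  rintro ⟨-, -, hw⟩
  simp [halfTree] at hw

lemma eq_of_forall_mem_halfTree {w' : V} (hT : T.IsTree) (hσ : T.IsConsistentOrientation σ)
    (hw : ∀ u v, T.Adj u v → σ u v → w ∈ T.halfTree u v)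
    (hw' : ∀ u v, T.Adj u v → σ u v → w' ∈ T.halfTree u v) : w' = w := by
  by_contra hne
  obtain ⟨a, hw'a, ha⟩ := hT.connected.exists_adj_dist_add_one_eq hne
  by_cases hσw'a : σ w' a
  · have h : T.dist w w' < T.dist w a := hw w' a hw'a hσw'a
    rw [dist_comm (u := w) (v := w'), dist_comm (u := w) (v := a)] at h
    omega
  · have h : T.dist w' a < T.dist w' w' := hw' a w' hw'a.symm ((hσ.choice hw'a.symm).mpr hσw'a)
    rw [dist_self] at h
    omega

end IsConsistentOrientation

theorem IsTree.existsUnique_forall_mem_halfTree [Finite V] (hT : T.IsTree) {σ : V → V → Prop}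
    (hσ : T.IsConsistentOrientation σ) :
    ∃! w, ∀ u v, T.Adj u v → σ u v → w ∈ T.halfTree u v := by
  have := hT.connected.nonempty
  obtain ⟨w, hmax⟩ := Finite.exists_max fun x => (T.chosenHalfTreesContaining σ x).ncard
  have hw : ∀ u v, T.Adj u v → σ u v → w ∈ T.halfTree u v := fun u v huv hσuv => by
    by_contra hw
    obtain ⟨a, hwa, hσaw⟩ := hσ.exists_adj_of_notMem_halfTree hT huv hσuv hw
    exact (hmax a).not_gt (Set.ncard_lt_ncard (hσ.chosenHalfTreesContaining_ssubset hT hwa hσaw))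
  exact ⟨w, hw, fun w' hw' => hσ.eq_of_forall_mem_halfTree hT hw hw'⟩

end SimpleGraph

variable {Idx : Type*} [Fintype Idx] {Vtx : Idx → Type*} [∀ U, Fintype (Vtx U)]
  {F : Type*} [Fintype F]

/-- Here `σ U u v` means that the ultrafilter `σ` assigns to the edge `{u, v}` of `T_U` its
half-tree on the `u`-side. -/
theorem ultrafilter_selects_vertex (H : HFT Idx Vtx F)
    (σ : (U : Idx) → Vtx U → Vtx U → Prop)
    (hchoice : ∀ (U : Idx) (u v : Vtx U), (H.G U).Adj u v → (σ U u v ↔ ¬ σ U v u))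
    (hconsistent : ∀ (U V : Idx) (u v : Vtx U) (u' v' : Vtx V),
      (H.G U).Adj u v → (H.G V).Adj u' v' → σ U u v →
      H.halfSpace U u v ⊆ H.halfSpace V u' v' → σ V u' v') :
    ∀ U : Idx, ∃! w : Vtx U,
      ∀ u v : Vtx U, (H.G U).Adj u v → σ U u v → w ∈ H.halfTree U u v := by
  intro U
  refine (H.tree U).existsUnique_forall_mem_halfTree ⟨fun u v => hchoice U u v, ?_⟩
  intro u v a b huv hab hσuv hsub
  exact hconsistent U U u v a b huv hab hσuv fun x hx => ⟨hx.1, hsub hx.2⟩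
end

section
/- The model is its own cubical dual (Theorem 'dual', finite case): Let a hierarchical family of trees be given, with 0-consistent set Q. For x̂ ∈ Q, let D(x̂) be the choice assigning to each edge e of each tree T_U the half-tree of e containing x̂_U. Then: (1) D(x̂) is an ultrafilter for every x̂ ∈ Q; (2) D is a bijection from Q onto the set of all ultrafilters; (3) for all x̂, ŷ ∈ Q, the distance d_Q(x̂, ŷ) equals the number of walls separating x̂ from ŷ, which equals the number of edges e (over all trees T_U, U ∈ 𝒰) on which the ultrafilters D(x̂) and D(ŷ) make different choices. In particular, Q with its ℓ¹ metric is isometric to the 0-skeleton, with the combinatorial metric, of the CAT(0) cube complex dual to the pocset of half-spaces of Q. -/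
variable {Idx : Type*} [Fintype Idx] {Vtx : Idx → Type*} [∀ U, Fintype (Vtx U)]
  {F : Type*} [Fintype F]


set_option linter.unusedSectionVars false

namespace TreeAux
open SimpleGraph
variable {α : Type*} [DecidableEq α] {G : SimpleGraph α}

lemma edge_mem_walk (hT : G.IsTree) {u v : α} (h : G.Adj u v) (W : G.Walk u v) :
    s(u, v) ∈ W.edges := by
  have hp : W.bypass = (SimpleGraph.Path.singleton h : G.Path u v).1 :=
    congrArg Subtype.val
      (hT.IsAcyclic.path_unique ⟨W.bypass, W.bypass_isPath⟩ (SimpleGraph.Path.singleton h))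
  have hm : s(u,v) ∈ W.bypass.edges := by
    rw [hp]; simp [SimpleGraph.Path.singleton]
  exact W.edges_bypass_subset hm

lemma dist_add_of_mem_support (hc : G.Connected) {a b z : α} (W : G.Walk a b)
    (hW : W.length = G.dist a b) (hz : z ∈ W.support) :
    G.dist a z + G.dist z b = G.dist a b := by
  have h1 : G.dist a z ≤ (W.takeUntil z hz).length := dist_le _
  have h2 : G.dist z b ≤ (W.dropUntil z hz).length := dist_le _
  have h3 : (W.takeUntil z hz).length + (W.dropUntil z hz).length = W.length := by
    rw [← Walk.length_append, W.take_spec hz]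
  have h4 := hc.dist_triangle (u := a) (v := z) (w := b)
  omega

/-- Lemma B : distances from any vertex to the two endpoints of an edge differ. -/
lemma dist_ne_of_adj (hT : G.IsTree) {u v : α} (h : G.Adj u v) (z : α) :
    G.dist z u ≠ G.dist z v := by
  have hc := hT.isConnected
  intro he
  obtain ⟨P, hP⟩ := hc.exists_walk_length_eq_dist z u
  obtain ⟨Q, hQ⟩ := hc.exists_walk_length_eq_dist z v
  have hmem : s(u,v) ∈ (P.reverse.append Q).edges := edge_mem_walk hT h _
  rw [Walk.edges_append, List.mem_append, Walk.edges_reverse, List.mem_reverse] at hmem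
  have huv : G.dist u v = 1 := dist_eq_one_iff_adj.mpr h
  rcases hmem with hm | hm
  · have hv : v ∈ P.support := Walk.snd_mem_support_of_mem_edges P hm
    have := dist_add_of_mem_support hc P hP hv
    have hvu : G.dist v u = 1 := by rw [dist_comm]; exact huv
    omega
  · have hu : u ∈ Q.support := Walk.fst_mem_support_of_mem_edges Q hm
    have := dist_add_of_mem_support hc Q hQ hu
    omega

/-- one more step: if `z` is strictly closer to `u`, then `dist z v = dist z u + 1`. -/
lemma dist_succ_of_lt (hc : G.Connected) {u v : α} (h : G.Adj u v) {z : α}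
    (hz : G.dist z u < G.dist z v) : G.dist z v = G.dist z u + 1 := by
  have h1 := hc.dist_triangle (u := z) (v := u) (w := v)
  have h2 : G.dist u v = 1 := dist_eq_one_iff_adj.mpr h
  omega

/-- Lemma A : the only edge separating two adjacent vertices is their own edge. -/
lemma adj_sep_eq (hT : G.IsTree) {u v w w' : α} (huv : G.Adj u v) (hww' : G.Adj w w')
    (h1 : G.dist w u < G.dist w v) (h2 : G.dist w' v < G.dist w' u) :
    w = u ∧ w' = v := by
  have hc := hT.isConnected
  obtain ⟨P, hP⟩ := hc.exists_walk_length_eq_dist u w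
  obtain ⟨Q, hQ⟩ := hc.exists_walk_length_eq_dist w' v
  have hmem : s(u,v) ∈ (P.append (Walk.cons hww' Q)).edges := edge_mem_walk hT huv _
  rw [Walk.edges_append, List.mem_append, Walk.edges_cons, List.mem_cons] at hmem
  have huv1 : G.dist u v = 1 := dist_eq_one_iff_adj.mpr huv
  rcases hmem with hm | hm | hm
  · exfalso
    have hv : v ∈ P.support := Walk.snd_mem_support_of_mem_edges P hm
    have := dist_add_of_mem_support hc P hP hv
    have e1 : G.dist w u = G.dist u w := dist_comm
    have e2 : G.dist w v = G.dist v w := dist_comm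
    have e3 : G.dist u v = G.dist v u := dist_comm
    omega
  · rw [Sym2.eq_iff] at hm
    rcases hm with ⟨hu, hv⟩ | ⟨hu, hv⟩
    · exact ⟨hu.symm, hv.symm⟩
    · exfalso
      rw [hu, hv] at h2
      have h0 : G.dist w' w' = 0 := by simp
      omega
  · exfalso
    have hu : u ∈ Q.support := Walk.fst_mem_support_of_mem_edges Q hm
    have := dist_add_of_mem_support hc Q hQ hu
    omega

/-- Lemma F : any walk between vertices on opposite sides of an edge contains the edge. -/
lemma edge_mem_walk_of_sep (hT : G.IsTree) {u v z w : α} (huv : G.Adj u v)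
    (W : G.Walk z w) (hw : G.dist w v < G.dist w u) (hz : G.dist z u < G.dist z v) :
    s(u,v) ∈ W.edges := by
  induction W with
  | nil => omega
  | @cons z z' w h' W' ih =>
    rw [Walk.edges_cons, List.mem_cons]
    by_cases hz' : G.dist z' u < G.dist z' v
    · exact Or.inr (ih hw hz')
    · have hne := dist_ne_of_adj hT huv z'
      have hz'' : G.dist z' v < G.dist z' u := by omega
      obtain ⟨e1, e2⟩ := adj_sep_eq hT huv h' hz hz''
      subst e1; subst e2; exact Or.inl rfl

/-- Lemma X : distance across a separating edge decomposes. -/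
lemma dist_cross (hT : G.IsTree) {u v z w : α} (huv : G.Adj u v)
    (hz : G.dist z u < G.dist z v) (hw : G.dist w v < G.dist w u) :
    G.dist z w = G.dist z u + 1 + G.dist v w := by
  have hc := hT.isConnected
  have hzw : z ≠ w := by intro he; subst he; omega
  obtain ⟨W, hW⟩ := hc.exists_walk_length_eq_dist z w
  have hmem := edge_mem_walk_of_sep hT huv W hw hz
  have hv : v ∈ W.support := Walk.snd_mem_support_of_mem_edges W hmem
  have h1 := dist_add_of_mem_support hc W hW hv
  have h2 := dist_succ_of_lt hc huv hz
  omega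

/-- first step of a geodesic. -/
lemma exists_step (hc : G.Connected) {s t : α} (h : s ≠ t) :
    ∃ u₁, G.Adj s u₁ ∧ G.dist u₁ t + 1 = G.dist s t := by
  obtain ⟨W, hW⟩ := hc.exists_walk_length_eq_dist s t
  cases W with
  | nil => exact absurd rfl h
  | @cons s u₁ t h' W' =>
    refine ⟨u₁, h', ?_⟩
    have hle : G.dist u₁ t ≤ W'.length := dist_le _
    have h2 := hc.dist_triangle (u := s) (v := u₁) (w := t)
    have h3 : G.dist s u₁ = 1 := dist_eq_one_iff_adj.mpr h'
    rw [Walk.length_cons] at hW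
    omega


/-- trichotomy -/
lemma lt_or_lt (hT : G.IsTree) {u v : α} (h : G.Adj u v) (z : α) :
    G.dist z u < G.dist z v ∨ G.dist z v < G.dist z u := by
  have := dist_ne_of_adj hT h z; omega

/-- both in the same half implies the deleted vertex is off the geodesic -/
lemma sameComp_of_lt (hc : G.Connected) {c d a b : α} (h : G.Adj c d)
    (ha : G.dist a c < G.dist a d) (hb : G.dist b c < G.dist b d) :
    G.dist a d + G.dist d b ≠ G.dist a b := by
  have h1 := dist_succ_of_lt hc h ha
  have h2 := dist_succ_of_lt hc h hb
  have h3 := hc.dist_triangle (u := a) (v := c) (w := b)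
  have e1 : G.dist d b = G.dist b d := dist_comm
  have e2 : G.dist c b = G.dist b c := dist_comm
  omega

/-- Counting lemma: the distance equals the number of separating (oriented) edges. -/
lemma card_sep (hT : G.IsTree) [Fintype α] (a b : α) :
    ({p : α × α | G.Adj p.1 p.2 ∧ G.dist a p.1 < G.dist a p.2 ∧
        G.dist b p.2 < G.dist b p.1}).ncard = G.dist a b := by
  have hc := hT.isConnected
  suffices H : ∀ (n : ℕ) (a : α), G.dist a b = n →
      ({p : α × α | G.Adj p.1 p.2 ∧ G.dist a p.1 < G.dist a p.2 ∧
        G.dist b p.2 < G.dist b p.1}).ncard = n from H _ a rfl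
  intro n
  induction n with
  | zero =>
    intro a ha
    have hab : a = b := hc.dist_eq_zero_iff.mp ha
    subst hab
    have : {p : α × α | G.Adj p.1 p.2 ∧ G.dist a p.1 < G.dist a p.2 ∧
        G.dist a p.2 < G.dist a p.1} = ∅ := by
      ext p; simp only [Set.mem_setOf_eq, Set.mem_empty_iff_false, iff_false]
      rintro ⟨_, h1, h2⟩; omega
    rw [this, Set.ncard_empty]
  | succ n ih =>
    intro a ha
    have hab : a ≠ b := by
      intro h; subst h; rw [hc.dist_eq_zero_iff.mpr rfl] at ha; omega
    obtain ⟨a', haa', ha'⟩ := exists_step hc hab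
    rw [ha] at ha'
    have hd1 : G.dist a a' = 1 := dist_eq_one_iff_adj.mpr haa'
    have hd0 : G.dist a a = 0 := hc.dist_eq_zero_iff.mpr rfl
    have hba : G.dist b a = n + 1 := by rw [dist_comm]; exact ha
    have hba' : G.dist b a' = n := by rw [dist_comm]; omega
    have key : {p : α × α | G.Adj p.1 p.2 ∧ G.dist a p.1 < G.dist a p.2 ∧
        G.dist b p.2 < G.dist b p.1} =
        insert (a, a') {p : α × α | G.Adj p.1 p.2 ∧ G.dist a' p.1 < G.dist a' p.2 ∧
        G.dist b p.2 < G.dist b p.1} := by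
      ext ⟨p, q⟩
      simp only [Set.mem_setOf_eq, Set.mem_insert_iff, Prod.mk.injEq]
      constructor
      · rintro ⟨hadj, h1, h2⟩
        by_cases hpq : p = a ∧ q = a'
        · exact Or.inl hpq
        · refine Or.inr ⟨hadj, ?_, h2⟩
          rcases lt_or_lt hT hadj a' with h | h
          · exact h
          · obtain ⟨e1, e2⟩ := adj_sep_eq hT hadj haa' h1 h
            exact absurd ⟨e1.symm, e2.symm⟩ hpq
      · rintro (⟨hp, hq⟩ | ⟨hadj, h1, h2⟩)
        · subst hp; subst hq
          exact ⟨haa', by omega, by omega⟩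
        · refine ⟨hadj, ?_, h2⟩
          rcases lt_or_lt hT hadj a with h | h
          · exact h
          · obtain ⟨e1, e2⟩ := adj_sep_eq hT hadj haa'.symm h1 h
            exfalso; rw [← e1, ← e2] at h2; omega
    have hnot : (a, a') ∉ {p : α × α | G.Adj p.1 p.2 ∧ G.dist a' p.1 < G.dist a' p.2 ∧
        G.dist b p.2 < G.dist b p.1} := by
      simp only [Set.mem_setOf_eq]
      rintro ⟨_, h1, _⟩
      have e1 : G.dist a' a = 1 := by rw [dist_comm]; exact hd1
      have e2 : G.dist a' a' = 0 := hc.dist_eq_zero_iff.mpr rfl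
      omega
    rw [key, Set.ncard_insert_of_notMem hnot (Set.toFinite _), ih a' (by omega)]


/-- from a consistent orientation of the edges of a finite tree one obtains a vertex
toward which every edge points -/
lemma exists_sink [Fintype α] (hT : G.IsTree) (σ : α → α → Prop)
    (hσ1 : ∀ u v, G.Adj u v → (σ u v ↔ ¬ σ v u))
    (hσ2 : ∀ u v u' v', G.Adj u v → G.Adj u' v' → σ u v →
      ({z | G.dist z u < G.dist z v} ⊆ {z | G.dist z u' < G.dist z v'}) → σ u' v') :
    ∃ w : α, ∀ u v, G.Adj u v → (σ u v ↔ G.dist w u < G.dist w v) := by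
  classical
  have hc := hT.isConnected
  have hne : Nonempty α := hc.nonempty
  set Φ : α → ℕ := fun w =>
    ({p : α × α | G.Adj p.1 p.2 ∧ σ p.1 p.2 ∧ ¬ (G.dist w p.1 < G.dist w p.2)}).ncard with hΦ
  obtain ⟨w, -, hmin⟩ :=
    Finset.exists_min_image (Finset.univ : Finset α) Φ ⟨Classical.arbitrary α, Finset.mem_univ _⟩
  -- claim: Φ w = 0
  have hzero : Φ w = 0 := by
    by_contra h0
    obtain ⟨⟨u, v⟩, huv, hσuv, hwside⟩ :=
      Set.nonempty_of_ncard_ne_zero (s := {p : α × α | G.Adj p.1 p.2 ∧ σ p.1 p.2 ∧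
        ¬ (G.dist w p.1 < G.dist w p.2)}) h0
    dsimp only at huv hσuv hwside
    have hwv : G.dist w v < G.dist w u := by
      rcases lt_or_lt hT huv w with h | h
      · exact absurd h hwside
      · exact h
    have hwu : w ≠ u := by
      intro h; subst h; rw [hc.dist_eq_zero_iff.mpr rfl] at hwv; omega
    obtain ⟨w', hww', hw'⟩ := exists_step hc hwu
    -- the chosen side of {u,v} is contained in the w'-side of {w,w'}
    have hincl : {z | G.dist z u < G.dist z v} ⊆ {z | G.dist z w' < G.dist z w} := by
      by_cases hwveq : w = v
      · subst hwveq
        have : G.dist w u = 1 := by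
          rw [SimpleGraph.dist_comm, dist_eq_one_iff_adj]; exact huv
        have hw'u : w' = u := by
          have : G.dist w' u = 0 := by omega
          exact hc.dist_eq_zero_iff.mp this
        subst hw'u
        intro z hz; exact hz
      · -- w ≠ v
        have hpar : G.dist w u = G.dist w v + 1 := dist_succ_of_lt hc huv.symm hwv
        have hw'u : G.dist w' u = G.dist w v := by omega
        have hvne := dist_ne_of_adj hT hww' v
        have ht1 := hc.dist_triangle (u := v) (v := w) (w := w')
        have ht2 := hc.dist_triangle (u := v) (v := w') (w := w)
        have hd1 : G.dist w w' = 1 := dist_eq_one_iff_adj.mpr hww'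
        have hd1' : G.dist w' w = 1 := by rw [SimpleGraph.dist_comm]; exact hd1
        have hwv1 : G.dist w v ≠ 0 := fun h => hwveq (hc.dist_eq_zero_iff.mp h)
        -- the neighbor w' is still on the v-side of {u,v}
        have hw'v : G.dist w' v + 1 = G.dist w v := by
          rcases (by omega : G.dist v w' = G.dist v w + 1 ∨ G.dist v w' + 1 = G.dist v w)
            with hcase | hcase
          · exfalso
            have e1 : G.dist w' v = G.dist v w' := SimpleGraph.dist_comm
            have e2 : G.dist w v = G.dist v w := SimpleGraph.dist_comm
            have hside : G.dist w' u < G.dist w' v := by omega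
            obtain ⟨e3, e4⟩ := adj_sep_eq hT huv hww'.symm hside hwv
            exact hwveq e4
          · have e1 : G.dist w' v = G.dist v w' := SimpleGraph.dist_comm
            have e2 : G.dist w v = G.dist v w := SimpleGraph.dist_comm
            omega
        intro z hz
        simp only [Set.mem_setOf_eq] at hz ⊢
        have hz1 := dist_cross hT huv hz hwv
        have hz2 : G.dist z w' = G.dist z u + 1 + G.dist v w' :=
          dist_cross hT huv hz (by omega)
        have e3 : G.dist v w' = G.dist w' v := SimpleGraph.dist_comm
        have e4 : G.dist v w = G.dist w v := SimpleGraph.dist_comm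
        omega
    have hσw : σ w' w := hσ2 u v w' w huv hww'.symm hσuv hincl
    -- the bad set strictly decreases
    have hdww : G.dist w w = 0 := hc.dist_eq_zero_iff.mpr rfl
    have hdww' : G.dist w w' = 1 := dist_eq_one_iff_adj.mpr hww'
    have hdw'w : G.dist w' w = 1 := by rw [SimpleGraph.dist_comm]; exact hdww'
    have hdw'w' : G.dist w' w' = 0 := hc.dist_eq_zero_iff.mpr rfl
    have key : {p : α × α | G.Adj p.1 p.2 ∧ σ p.1 p.2 ∧ ¬ (G.dist w p.1 < G.dist w p.2)} =
        insert (w', w) {p : α × α | G.Adj p.1 p.2 ∧ σ p.1 p.2 ∧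
          ¬ (G.dist w' p.1 < G.dist w' p.2)} := by
      ext ⟨p, q⟩
      simp only [Set.mem_setOf_eq, Set.mem_insert_iff, Prod.mk.injEq]
      constructor
      · rintro ⟨hadj, hs, hside⟩
        by_cases hpq : p = w' ∧ q = w
        · exact Or.inl hpq
        · refine Or.inr ⟨hadj, hs, ?_⟩
          intro hside'
          have hwq : G.dist w q < G.dist w p := by
            rcases lt_or_lt hT hadj w with h | h
            · exact absurd h hside
            · exact h
          obtain ⟨e1, e2⟩ := adj_sep_eq hT hadj hww'.symm hside' hwq
          exact hpq ⟨e1.symm, e2.symm⟩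
      · rintro (⟨hp, hq⟩ | ⟨hadj, hs, hside⟩)
        · subst hp; subst hq
          exact ⟨hww'.symm, hσw, by omega⟩
        · refine ⟨hadj, hs, ?_⟩
          intro hside'
          have hw'q : G.dist w' q < G.dist w' p := by
            rcases lt_or_lt hT hadj w' with h | h
            · exact absurd h hside
            · exact h
          obtain ⟨e1, e2⟩ := adj_sep_eq hT hadj hww' hside' hw'q
          -- then (p,q) = (w,w'), so σ w w' and σ w' w both hold: contradiction
          rw [← e1, ← e2] at hs
          exact ((hσ1 w w' hww').mp hs) hσw
    have hnot : (w', w) ∉ {p : α × α | G.Adj p.1 p.2 ∧ σ p.1 p.2 ∧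
        ¬ (G.dist w' p.1 < G.dist w' p.2)} := by
      simp only [Set.mem_setOf_eq]
      rintro ⟨-, -, h⟩
      exact h (by omega)
    have hΦw : Φ w = Φ w' + 1 := by
      rw [hΦ]
      simp only
      rw [key, Set.ncard_insert_of_notMem hnot (Set.toFinite _)]
    have := hmin w' (Finset.mem_univ _)
    omega
  -- conclude
  refine ⟨w, fun u v huv => ?_⟩
  constructor
  · intro hs
    by_contra hside
    have hmem : (u, v) ∈ {p : α × α | G.Adj p.1 p.2 ∧ σ p.1 p.2 ∧
        ¬ (G.dist w p.1 < G.dist w p.2)} := ⟨huv, hs, hside⟩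
    exact Set.ncard_ne_zero_of_mem hmem (Set.toFinite _) hzero
  · intro hside
    by_contra hs
    have hs' : σ v u := by
      by_contra hs''
      exact hs ((hσ1 u v huv).mpr hs'')
    have hmem : (v, u) ∈ {p : α × α | G.Adj p.1 p.2 ∧ σ p.1 p.2 ∧
        ¬ (G.dist w p.1 < G.dist w p.2)} := ⟨huv.symm, hs', by dsimp only; omega⟩
    exact Set.ncard_ne_zero_of_mem hmem (Set.toFinite _) hzero


end TreeAux

/-- **The model is its own cubical dual** (Theorem `dual`, finite case). The map `D`
sending `x̂ ∈ Q` to the choice assigning to each edge the half-tree containing the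
corresponding coordinate of `x̂` is a bijection from `Q` onto the set of ultrafilters,
and `d_Q(x̂, ŷ)` equals the number of walls separating `x̂` from `ŷ`, which equals the
number of edges on which `D x̂` and `D ŷ` make different choices. -/
theorem model_is_cubical_dual (H : HFT Idx Vtx F) :
    -- (1) for `x ∈ Q`, the induced choice is an ultrafilter:
    (∀ x ∈ H.Q,
      (∀ (U : Idx) (u v : Vtx U), (H.G U).Adj u v →
        (x U ∈ H.halfTree U u v ↔ x U ∉ H.halfTree U v u)) ∧
      (∀ (U V : Idx) (u v : Vtx U) (u' v' : Vtx V),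
        (H.G U).Adj u v → (H.G V).Adj u' v' → x U ∈ H.halfTree U u v →
        H.halfSpace U u v ⊆ H.halfSpace V u' v' → x V ∈ H.halfTree V u' v')) ∧
    -- (2) `D` is injective …
    (∀ x ∈ H.Q, ∀ y ∈ H.Q,
      (∀ (U : Idx) (u v : Vtx U), (H.G U).Adj u v →
        (x U ∈ H.halfTree U u v ↔ y U ∈ H.halfTree U u v)) → x = y) ∧
    -- … and surjective onto the set of ultrafilters
    (∀ σ : (U : Idx) → Vtx U → Vtx U → Prop,
      (∀ (U : Idx) (u v : Vtx U), (H.G U).Adj u v → (σ U u v ↔ ¬ σ U v u)) →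
      (∀ (U V : Idx) (u v : Vtx U) (u' v' : Vtx V),
        (H.G U).Adj u v → (H.G V).Adj u' v' → σ U u v →
        H.halfSpace U u v ⊆ H.halfSpace V u' v' → σ V u' v') →
      ∃ x ∈ H.Q, ∀ (U : Idx) (u v : Vtx U), (H.G U).Adj u v →
        (σ U u v ↔ x U ∈ H.halfTree U u v)) ∧
    -- (3) the distance equals the number of separating walls, which equals the number
    -- of edges with different choices (each wall counted via one of its orientations)
    (∀ x ∈ H.Q, ∀ y ∈ H.Q,
      H.dQ x y = ∑ U : Idx, Set.ncard {p : Vtx U × Vtx U |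
          (H.G U).Adj p.1 p.2 ∧ x U ∈ H.halfTree U p.1 p.2 ∧
          y U ∈ H.halfTree U p.2 p.1} ∧
      H.dQ x y = ∑ U : Idx, Set.ncard {p : Vtx U × Vtx U |
          (H.G U).Adj p.1 p.2 ∧ x U ∈ H.halfTree U p.1 p.2 ∧
          y U ∉ H.halfTree U p.1 p.2}) := by
    classical
  have hT : ∀ U, (H.G U).IsTree := H.tree
  have hc : ∀ U, (H.G U).Connected := fun U => (H.tree U).isConnected
  have hmem : ∀ (U : Idx) (w u v : Vtx U),
      w ∈ H.halfTree U u v ↔ (H.G U).dist w u < (H.G U).dist w v := fun _ _ _ _ => Iff.rfl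
  refine ⟨?_, ?_, ?_, ?_⟩
  · -- (1) D x is an ultrafilter
    intro x hx
    constructor
    · intro U u v huv
      rw [hmem, hmem]
      have hne := TreeAux.dist_ne_of_adj (hT U) huv (x U)
      constructor
      · intro h h'; omega
      · intro h; omega
    · intro U V u v u' v' huv hu'v' hxm hsub
      exact (hsub ⟨hx, hxm⟩).2
  · -- (2) injectivity
    intro x hx y hy h
    funext U
    by_contra hne
    obtain ⟨z, hadj, hz⟩ := TreeAux.exists_step (hc U) hne
    have hd1 : (H.G U).dist (x U) z = 1 := SimpleGraph.dist_eq_one_iff_adj.mpr hadj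
    have hd0 : (H.G U).dist (x U) (x U) = 0 := (hc U).dist_eq_zero_iff.mpr rfl
    have hxm : x U ∈ H.halfTree U (x U) z := by rw [hmem]; omega
    have hym := (h U (x U) z hadj).mp hxm
    rw [hmem] at hym
    have e1 : (H.G U).dist (y U) (x U) = (H.G U).dist (x U) (y U) := SimpleGraph.dist_comm
    have e2 : (H.G U).dist (y U) z = (H.G U).dist z (y U) := SimpleGraph.dist_comm
    omega
  · -- (3) surjectivity
    intro σ hσ1 hσ2
    have hsink : ∀ U : Idx, ∃ w : Vtx U, ∀ u v, (H.G U).Adj u v →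
        (σ U u v ↔ (H.G U).dist w u < (H.G U).dist w v) := by
      intro U
      refine TreeAux.exists_sink (hT U) (σ U) (hσ1 U) ?_
      intro u v u' v' huv hu'v' hs hsub
      refine hσ2 U U u v u' v' huv hu'v' hs ?_
      rintro q ⟨hq, hqm⟩
      exact ⟨hq, hsub hqm⟩
    choose x hx using hsink
    have hxQ : x ∈ H.Q := by
      constructor
      · -- transverse consistency
        intro U V htr
        by_contra hcon
        push_neg at hcon
        obtain ⟨h1, h2⟩ := hcon
        obtain ⟨u₁, hadj₁, hs₁⟩ := TreeAux.exists_step (hc U) (Ne.symm h1)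
        obtain ⟨b₁, hadj₂, hs₂⟩ := TreeAux.exists_step (hc V) (Ne.symm h2)
        have hσu : σ U u₁ (H.δup V U) := by
          rw [hx U u₁ (H.δup V U) hadj₁.symm]
          have e1 : (H.G U).dist (x U) u₁ = (H.G U).dist u₁ (x U) := SimpleGraph.dist_comm
          have e2 : (H.G U).dist (x U) (H.δup V U) = (H.G U).dist (H.δup V U) (x U) :=
            SimpleGraph.dist_comm
          have : (H.G U).dist (H.δup V U) (x U) ≠ 0 :=
            fun h => (Ne.symm h1) ((hc U).dist_eq_zero_iff.mp h)
          omega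
        have hincl : H.halfSpace U u₁ (H.δup V U) ⊆ H.halfSpace V (H.δup U V) b₁ := by
          rintro q ⟨hq, hqm⟩
          refine ⟨hq, ?_⟩
          rw [hmem] at hqm
          have hqne : q U ≠ H.δup V U := by
            intro h
            rw [h, (hc U).dist_eq_zero_iff.mpr rfl] at hqm
            omega
          rcases hq.1 U V htr with h | h
          · exact absurd h hqne
          · rw [hmem, h, (hc V).dist_eq_zero_iff.mpr rfl,
              SimpleGraph.dist_eq_one_iff_adj.mpr hadj₂]
            omega
        have hσv := hσ2 U V u₁ (H.δup V U) (H.δup U V) b₁ hadj₁.symm hadj₂ hσu hincl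
        rw [hx V (H.δup U V) b₁ hadj₂] at hσv
        have e1 : (H.G V).dist (x V) b₁ = (H.G V).dist b₁ (x V) := SimpleGraph.dist_comm
        have e2 : (H.G V).dist (x V) (H.δup U V) = (H.G V).dist (H.δup U V) (x V) :=
          SimpleGraph.dist_comm
        omega
      · -- nested consistency
        intro U V hpn
        by_contra hcon
        push_neg at hcon
        obtain ⟨h1, h2⟩ := hcon
        obtain ⟨u₁, hadj₁, hs₁⟩ := TreeAux.exists_step (hc U) (Ne.symm h1)
        obtain ⟨b₁, hadj₂, hs₂⟩ := TreeAux.exists_step (hc V) (Ne.symm h2)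
        have hxside : (H.G U).dist (x U) u₁ < (H.G U).dist (x U) (H.δup V U) := by
          have e1 : (H.G U).dist (x U) u₁ = (H.G U).dist u₁ (x U) := SimpleGraph.dist_comm
          have e2 : (H.G U).dist (x U) (H.δup V U) = (H.G U).dist (H.δup V U) (x U) :=
            SimpleGraph.dist_comm
          have : (H.G U).dist (H.δup V U) (x U) ≠ 0 :=
            fun h => (Ne.symm h1) ((hc U).dist_eq_zero_iff.mp h)
          omega
        have hσu : σ U u₁ (H.δup V U) := by
          rw [hx U u₁ (H.δup V U) hadj₁.symm]; exact hxside
        have hincl : H.halfSpace U u₁ (H.δup V U) ⊆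
            H.halfSpace V (H.δdown U V (x U)) b₁ := by
          rintro q ⟨hq, hqm⟩
          refine ⟨hq, ?_⟩
          rw [hmem] at hqm
          have hqne : q U ≠ H.δup V U := by
            intro h
            rw [h, (hc U).dist_eq_zero_iff.mpr rfl] at hqm
            omega
          have htsc : treeSameComp (H.G U) (H.δup V U) (q U) (x U) :=
            ⟨hqne, h1, TreeAux.sameComp_of_lt (hc U) hadj₁.symm hqm hxside⟩
          have hdd : H.δdown U V (q U) = H.δdown U V (x U) :=
            H.bgi_const U V hpn (q U) (x U) htsc
          rcases hq.2 U V hpn with h | h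
          · exact absurd h hqne
          · rw [hmem, h, hdd, (hc V).dist_eq_zero_iff.mpr rfl,
              SimpleGraph.dist_eq_one_iff_adj.mpr hadj₂]
            omega
        have hσv := hσ2 U V u₁ (H.δup V U) (H.δdown U V (x U)) b₁ hadj₁.symm hadj₂ hσu hincl
        rw [hx V (H.δdown U V (x U)) b₁ hadj₂] at hσv
        have e1 : (H.G V).dist (x V) b₁ = (H.G V).dist b₁ (x V) := SimpleGraph.dist_comm
        have e2 : (H.G V).dist (x V) (H.δdown U V (x U)) =
            (H.G V).dist (H.δdown U V (x U)) (x V) := SimpleGraph.dist_comm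
        omega
    exact ⟨x, hxQ, fun U u v huv => hx U u v huv⟩
  · -- (4) distance formulas
    intro x hx y hy
    have key : ∀ U : Idx, ({p : Vtx U × Vtx U | (H.G U).Adj p.1 p.2 ∧
        x U ∈ H.halfTree U p.1 p.2 ∧ y U ∈ H.halfTree U p.2 p.1}).ncard =
        (H.G U).dist (x U) (y U) := fun U => TreeAux.card_sep (hT U) (x U) (y U)
    constructor
    · unfold HFT.dQ
      exact Finset.sum_congr rfl fun U _ => (key U).symm
    · unfold HFT.dQ
      refine Finset.sum_congr rfl fun U _ => ?_
      rw [← key U]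
      congr 1
      ext ⟨p, q⟩
      simp only [Set.mem_setOf_eq, hmem]
      constructor
      · rintro ⟨hadj, h1, h2⟩
        exact ⟨hadj, h1, by have := TreeAux.dist_ne_of_adj (hT U) hadj (y U); omega⟩
      · rintro ⟨hadj, h1, h2⟩
        exact ⟨hadj, h1, by have := TreeAux.dist_ne_of_adj (hT U) hadj (y U); omega⟩
end
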